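/- arXiv:2110.00849 — 4 statements merged into one kernel-verified Lean document; each statement's English description precedes it below -/
import Mathlib

section
/- Let $\rho$ be a primitive third root of unity in $\mathbb{C}$ and let $h(z_1,z_2,z_3) = z_1\bar{z_2} + \bar{z_1}z_2 + z_3\bar{z_3}$ be the Hermitian form on $\mathbb{C}^3$. Then the six matrices $g_0 = \rho\cdot 1_3$, $g_1 = \mathrm{diag}(1,1,\rho)$, $g_2$ with rows $(1,0,0),(\sqrt{-3},1,0),(0,0,1)$, $g_3$ with rows $(1,0,0),(\rho-1,1,\rho-1),(1-\rho^2,0,1)$, $g_4$ with rows $(1,\sqrt{-3},0),(0,1,0),(0,0,1)$, and $g_5$ with rows $(1,\rho-1,\rho-1),(0,1,0),(0,1-\rho^2,1)$ all preserve $h$, i.e. $h(g_i z) = h(z)$ for all $z\in\mathbb{C}^3$ and $i=0,\ldots,5$. -/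
open Complex Matrix

/-- The Hermitian form `h(z) = z₁ z̄₂ + z̄₁ z₂ + z₃ z̄₃` of signature (2,1) on ℂ³. -/
noncomputable def hform (z : Fin 3 → ℂ) : ℂ :=
  z 0 * (starRingEnd ℂ) (z 1) + (starRingEnd ℂ) (z 0) * z 1 + z 2 * (starRingEnd ℂ) (z 2)

lemma rho_cube : Complex.exp (2 * Real.pi * I / 3) ^ 3 = 1 := by
  have h : ((3 : ℕ) : ℂ) * (2 * Real.pi * I / 3) = 2 * Real.pi * I := by push_cast; ring
  rw [← Complex.exp_nat_mul, h, Complex.exp_two_pi_mul_I]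

lemma rho_ne_one : Complex.exp (2 * Real.pi * I / 3) ≠ 1 := by
  rw [Ne, Complex.exp_eq_one_iff]
  rintro ⟨n, hn⟩
  have h2 : (2 * (Real.pi : ℂ) * I) ≠ 0 := by
    simp [Real.pi_ne_zero, I_ne_zero]
  have h3 : ((3 * n : ℤ) : ℂ) * (2 * Real.pi * I) = 1 * (2 * Real.pi * I) := by
    push_cast
    linear_combination -3 * hn
  have h4 : ((3 * n : ℤ) : ℂ) = 1 := mul_right_cancel₀ h2 h3
  have h5 : (3 * n : ℤ) = 1 := by exact_mod_cast h4
  omega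
lemma rho_sum : Complex.exp (2 * Real.pi * I / 3) ^ 2 + Complex.exp (2 * Real.pi * I / 3) + 1 = 0 := by
  have h := rho_cube
  have hne := rho_ne_one
  have : (Complex.exp (2 * Real.pi * I / 3) - 1) *
      (Complex.exp (2 * Real.pi * I / 3) ^ 2 + Complex.exp (2 * Real.pi * I / 3) + 1) = 0 := by
    linear_combination h
  rcases mul_eq_zero.mp this with h1 | h2
  · exact absurd (sub_eq_zero.mp h1) hne
  · exact h2

lemma rho_conj : (starRingEnd ℂ) (Complex.exp (2 * Real.pi * I / 3)) =
    Complex.exp (2 * Real.pi * I / 3) ^ 2 := by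
  have h1 : (starRingEnd ℂ) (Complex.exp (2 * Real.pi * I / 3)) =
      Complex.exp (-(2 * Real.pi * I / 3)) := by
    rw [← Complex.exp_conj]
    congr 1
    rw [map_div₀]
    simp [Complex.conj_I, map_ofNat]
    ring
  rw [h1, Complex.exp_neg]
  have h3 := rho_cube
  have hmul : Complex.exp (2 * Real.pi * I / 3) * Complex.exp (2 * Real.pi * I / 3) ^ 2 = 1 := by
    linear_combination h3
  exact (eq_inv_of_mul_eq_one_left (by linear_combination h3)).symm

/-- the six generators of `Γ[√-3]` preserve the Hermitian form `h`. -/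
theorem generators_preserve_hform :
    let ρ : ℂ := Complex.exp (2 * Real.pi * I / 3)
    let s3 : ℂ := 2 * ρ + 1   -- √-3 = ρ - ρ²
    let g0 : Matrix (Fin 3) (Fin 3) ℂ := ρ • (1 : Matrix (Fin 3) (Fin 3) ℂ)
    let g1 : Matrix (Fin 3) (Fin 3) ℂ := !![1, 0, 0; 0, 1, 0; 0, 0, ρ]
    let g2 : Matrix (Fin 3) (Fin 3) ℂ := !![1, 0, 0; s3, 1, 0; 0, 0, 1]
    let g3 : Matrix (Fin 3) (Fin 3) ℂ := !![1, 0, 0; ρ - 1, 1, ρ - 1; 1 - ρ^2, 0, 1]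
    let g4 : Matrix (Fin 3) (Fin 3) ℂ := !![1, s3, 0; 0, 1, 0; 0, 0, 1]
    let g5 : Matrix (Fin 3) (Fin 3) ℂ := !![1, ρ - 1, ρ - 1; 0, 1, 0; 0, 1 - ρ^2, 1]
    ∀ g ∈ [g0, g1, g2, g3, g4, g5], ∀ z : Fin 3 → ℂ, hform (g.mulVec z) = hform z := by
  intro ρ s3 g0 g1 g2 g3 g4 g5 g hg z
  have h3 : ρ ^ 3 = 1 := rho_cube
  have hs : ρ ^ 2 + ρ + 1 = 0 := rho_sum
  have hc : (starRingEnd ℂ) ρ = ρ ^ 2 := rho_conj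
  simp only [List.mem_cons, List.not_mem_nil, or_false] at hg
  rcases hg with rfl | rfl | rfl | rfl | rfl | rfl <;>
    simp only [g0, g1, g2, g3, g4, g5, s3] <;>
    simp [hform, Matrix.mulVec, dotProduct, Fin.sum_univ_three, Matrix.smul_apply,
      Matrix.one_apply, Fin.ext_iff, map_add, _root_.map_mul, map_sub, _root_.map_one,
      map_ofNat, map_pow, hc]
  · linear_combination (z 0 * (starRingEnd ℂ) (z 1) + (starRingEnd ℂ) (z 0) * z 1 +
      z 2 * (starRingEnd ℂ) (z 2)) * h3
  · linear_combination (z 2 * (starRingEnd ℂ) (z 2)) * h3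
  · linear_combination (2 * z 0 * (starRingEnd ℂ) (z 0)) * hs
  · linear_combination (z 0 * (starRingEnd ℂ) (z 0) * (ρ^3 - ρ + 1) -
      ρ * z 2 * (starRingEnd ℂ) (z 0)) * h3
  · linear_combination (2 * z 1 * (starRingEnd ℂ) (z 1)) * hs
  · linear_combination (z 1 * (starRingEnd ℂ) (z 1) * (ρ^3 - ρ + 1) -
      ρ * z 2 * (starRingEnd ℂ) (z 1)) * h3
end

section
/- Let $\rho = e^{2\pi i/3}$. Define $\iota(u,v)$ to be the symmetric $3\times 3$ complex matrix $\begin{pmatrix} \frac{u^2+2\rho^2 v}{1-\rho} & \rho^2 u & \frac{\rho u^2 - \rho^2 v}{1-\rho} \\ \rho^2 u & -\rho^2 & u \\ \frac{\rho u^2 - \rho^2 v}{1-\rho} & u & \frac{\rho^2 u^2 + 2\rho^2 v}{1-\rho}\end{pmatrix}$. If $(u,v)\in\mathbb{C}^2$ satisfies $v + \bar{v} + u\bar{u} < 0$, then the imaginary part of $\iota(u,v)$ is positive definite; in particular $\iota(u,v)$ lies in the Siegel upper half space $\mathfrak{H}_3$. -/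
open Matrix Complex

/-- The modular embedding `ι : 𝔅 → ℌ₃`. -/
noncomputable def iotaEmb (u v : ℂ) : Matrix (Fin 3) (Fin 3) ℂ :=
  let ρ : ℂ := Complex.exp (2 * Real.pi * I / 3)
  !![(u ^ 2 + 2 * ρ ^ 2 * v) / (1 - ρ), ρ ^ 2 * u, (ρ * u ^ 2 - ρ ^ 2 * v) / (1 - ρ);
     ρ ^ 2 * u, -ρ ^ 2, u;
     (ρ * u ^ 2 - ρ ^ 2 * v) / (1 - ρ), u, (ρ ^ 2 * u ^ 2 + 2 * ρ ^ 2 * v) / (1 - ρ)]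


set_option linter.unnecessarySeqFocus false



lemma aux_pos (s q : ℝ) (hs : 0 < s) (h : 0 < 4*s*q) : 0 < q := by
  by_contra hq
  push_neg at hq
  nlinarith

lemma key_quad (s a b c x0 x1 x2 : ℝ) (hs : s^2 = 3) (hsp : 0 < s)
    (he : 2*c + a^2 + b^2 < 0) (hx : ¬ (x0 = 0 ∧ x1 = 0 ∧ x2 = 0)) :
    0 < (a*b + s*(a^2-b^2-4*c)/6) * x0^2
      + 2 * (-(b + s*a)/2) * (x0*x1)
      + 2 * (-(a*b) + s*(a^2-b^2)/6 + s*c/3) * (x0*x2)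
      + (s/2) * x1^2 + 2 * b * (x1*x2)
      + (-(s*(a^2-b^2)/3) - 2*s*c/3) * x2^2 := by
  apply aux_pos s _ hsp
  have hident : 4*s*((a*b + s*(a^2-b^2-4*c)/6) * x0^2
      + 2 * (-(b + s*a)/2) * (x0*x1)
      + 2 * (-(a*b) + s*(a^2-b^2)/6 + s*c/3) * (x0*x2)
      + (s/2) * x1^2 + 2 * b * (x1*x2)
      + (-(s*(a^2-b^2)/3) - 2*s*c/3) * x2^2)
      = 2*(s*x1 - (s*a+b)*x0 + 2*b*x2)^2
      + (-(2*c+a^2+b^2))*(2*x0-x2)^2 + 3*(-(2*c+a^2+b^2))*x2^2 := by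
    linear_combination ((-8/3*c - 2/3*b^2 - 4/3*a^2)*x0^2
      + (8/3*c - 4/3*b^2 + 4/3*a^2)*(x0*x2)
      + (-8/3*c + 4/3*b^2 - 4/3*a^2)*x2^2) * hs
  rw [hident]
  have hE : 0 < -(2*c+a^2+b^2) := by linarith
  have t1 : 0 ≤ 2*(s*x1 - (s*a+b)*x0 + 2*b*x2)^2 := by positivity
  have t2 : 0 ≤ (-(2*c+a^2+b^2))*(2*x0-x2)^2 := by positivity
  have t3 : 0 ≤ 3*(-(2*c+a^2+b^2))*x2^2 := by positivity
  rcases eq_or_ne x2 0 with h2 | h2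
  · rcases eq_or_ne x0 0 with h0 | h0
    · have h1 : x1 ≠ 0 := by tauto
      have : 0 < 2*(s*x1 - (s*a+b)*x0 + 2*b*x2)^2 := by
        have hL : s*x1 - (s*a+b)*x0 + 2*b*x2 = s*x1 := by rw [h0, h2]; ring
        rw [hL]
        positivity
      linarith
    · have h20 : (2*x0 - x2) ≠ 0 := by
        rw [h2, sub_zero]
        exact mul_ne_zero two_ne_zero h0
      have : 0 < (-(2*c+a^2+b^2))*(2*x0-x2)^2 := by positivity
      linarith
  · have : 0 < 3*(-(2*c+a^2+b^2))*x2^2 := by positivity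
    linarith


lemma rho_eq : Complex.exp (2 * Real.pi * I / 3) =
    Complex.mk (-(1/2)) (Real.sqrt 3 / 2) := by
  have h : (2 * (Real.pi:ℂ) * I / 3) = ((2 * Real.pi / 3 : ℝ) : ℂ) * I := by
    push_cast; ring
  rw [h, Complex.exp_mul_I]
  have hc : Real.cos (2 * Real.pi / 3) = -(1/2) := by
    have : (2 * Real.pi / 3) = Real.pi - Real.pi / 3 := by ring
    rw [this, Real.cos_pi_sub, Real.cos_pi_div_three]
  have hs : Real.sin (2 * Real.pi / 3) = Real.sqrt 3 / 2 := by
    have : (2 * Real.pi / 3) = Real.pi - Real.pi / 3 := by ring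
    rw [this, Real.sin_pi_sub, Real.sin_pi_div_three]
  rw [← Complex.ofReal_cos, ← Complex.ofReal_sin, hc, hs]
  apply Complex.ext <;> simp

section
variable (u v : ℂ)

lemma im_eq :
    (Matrix.of fun i j => ((iotaEmb u v) i j).im : Matrix (Fin 3) (Fin 3) ℝ) =
    let s := Real.sqrt 3
    let a := u.re; let b := u.im; let c := v.re
    !![a*b + s*(a^2-b^2-4*c)/6, -(b + s*a)/2, -(a*b) + s*(a^2-b^2)/6 + s*c/3;
       -(b + s*a)/2, s/2, b;
       -(a*b) + s*(a^2-b^2)/6 + s*c/3, b, -(s*(a^2-b^2)/3) - 2*s*c/3] := by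
  set s := Real.sqrt 3 with hsdef
  have hs : s^2 = 3 := Real.sq_sqrt (by norm_num)
  set ρ : ℂ := Complex.exp (2 * Real.pi * I / 3) with hρdef
  have hρ : ρ = Complex.mk (-(1/2)) (s/2) := rho_eq
  have hβ : ρ^2 = Complex.mk (-(1/2)) (-(s/2)) := by
    rw [hρ]
    apply Complex.ext
    · simp [Complex.mul_re, pow_two]
      linear_combination (-(1/4)) * hs
    · simp [Complex.mul_im, pow_two]; ring
  have h1ρ : 1 - ρ = Complex.mk (3/2) (-(s/2)) := by
    rw [hρ]; apply Complex.ext <;> simp <;> norm_num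
  have hα : (1 - ρ)⁻¹ = Complex.mk (1/2) (s/6) := by
    rw [inv_eq_iff_eq_inv, eq_comm, inv_eq_of_mul_eq_one_right]
    rw [h1ρ]
    apply Complex.ext
    · simp [Complex.mul_re]
      linear_combination (1/12) * hs
    · simp [Complex.mul_im]; ring
  have hγ : ρ^2 * (1 - ρ)⁻¹ = Complex.mk 0 (-(s/3)) := by
    rw [hβ, hα]
    apply Complex.ext
    · simp [Complex.mul_re]
      linear_combination (1/12) * hs
    · simp [Complex.mul_im]; ring
  have hδ : ρ * (1 - ρ)⁻¹ = Complex.mk (-(1/2)) (s/6) := by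
    rw [hα, hρ]
    apply Complex.ext
    · simp [Complex.mul_re]
      linear_combination (-(1/12)) * hs
    · simp [Complex.mul_im]; ring
  have e00 : (u ^ 2 + 2 * ρ ^ 2 * v) / (1 - ρ)
      = u^2 * Complex.mk (1/2) (s/6) + 2 * v * Complex.mk 0 (-(s/3)) := by
    rw [← hα, ← hγ, div_eq_mul_inv]; ring
  have e01 : ρ ^ 2 * u = u * Complex.mk (-(1/2)) (-(s/2)) := by
    rw [← hβ]; ring
  have e11 : -ρ ^ 2 = Complex.mk (1/2) (s/2) := by
    rw [hβ]; apply Complex.ext <;> simp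
  have e02 : (ρ * u ^ 2 - ρ ^ 2 * v) / (1 - ρ)
      = u^2 * Complex.mk (-(1/2)) (s/6) - v * Complex.mk 0 (-(s/3)) := by
    rw [← hδ, ← hγ, div_eq_mul_inv]; ring
  have e22 : (ρ ^ 2 * u ^ 2 + 2 * ρ ^ 2 * v) / (1 - ρ)
      = u^2 * Complex.mk 0 (-(s/3)) + 2 * v * Complex.mk 0 (-(s/3)) := by
    rw [← hγ, div_eq_mul_inv]; ring
  ext i j
  fin_cases i <;> fin_cases j <;>
    simp only [iotaEmb, ← hρdef, Matrix.of_apply, Matrix.cons_val', Matrix.cons_val_zero,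
      Matrix.cons_val_one, Matrix.head_cons, Matrix.empty_val', Matrix.cons_val_fin_one,
      Matrix.head_fin_const, e00, e01, e02, e11, e22] <;>
    simp [Complex.add_im, Complex.mul_im, Complex.mul_re, Complex.sub_im, pow_two] <;>
    ring
end


/-- if `(u,v)` lies in the 2-ball, i.e. `v + v̄ + u ū < 0`, then
`ι(u,v)` is symmetric and its imaginary part is positive definite, i.e.
`ι(u,v)` lies in the Siegel upper half space `ℌ₃`. -/
theorem iotaEmb_mem_siegel (u v : ℂ)
    (h : (v + (starRingEnd ℂ) v + u * (starRingEnd ℂ) u).re < 0) :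
    (iotaEmb u v).IsSymm ∧
      (Matrix.of fun i j => ((iotaEmb u v) i j).im : Matrix (Fin 3) (Fin 3) ℝ).PosDef := by
  have hsymm : (iotaEmb u v).IsSymm := by
    unfold Matrix.IsSymm
    ext i j
    fin_cases i <;> fin_cases j <;> simp [iotaEmb]
  refine ⟨hsymm, ?_⟩
  rw [im_eq]
  set s := Real.sqrt 3 with hsdef
  have hs : s^2 = 3 := Real.sq_sqrt (by norm_num)
  have hsp : 0 < s := Real.sqrt_pos.mpr (by norm_num)
  have he : 2*v.re + u.re^2 + u.im^2 < 0 := by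
    simp [Complex.add_re, Complex.mul_re, pow_two] at h ⊢
    linarith
  constructor
  · unfold Matrix.IsHermitian
    ext i j
    fin_cases i <;> fin_cases j <;> simp [Matrix.conjTranspose_apply]
  · intro x hx
    have hx' : ¬ (x 0 = 0 ∧ x 1 = 0 ∧ x 2 = 0) := by
      intro ⟨h0, h1, h2⟩
      apply hx
      ext i
      fin_cases i <;> assumption
    have hk := key_quad s u.re u.im v.re (x 0) (x 1) (x 2) hs hsp (by linarith) hx'
    simp [dotProduct, Matrix.mulVec, Fin.sum_univ_three, Finsupp.sum_fintype]
    nlinarith [hk]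
end

section
/- Let $P_n(X,Y,Z)$ for $n\geq 1$ be defined via $P_n = \sum_{\alpha\in N_n}\bar{\alpha}X(\alpha u)$ where $N_n = \{\alpha\in\mathbb{Z}[\rho] : N(\alpha)=n\}$, and let $Q_n = \sum_{\alpha\in N_n}\rho^{-\mathrm{Tr}(\alpha)}\bar{\alpha}X(\alpha u)$, where $X$ is an odd function satisfying $X(\epsilon z) = \epsilon X(z)$ for all sixth roots of unity $\epsilon$. Then $Q_n = P_n$ if $n\equiv 0\pmod 3$ and $Q_n = -P_n/2$ otherwise. -/
open Complex Finset

/-- let `N_n` be the set of Eisenstein integers of norm `n ≥ 1`,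
`X : ℂ → ℂ` a function equivariant under the sixth roots of unity
(`X(εz) = εX(z)` whenever `ε⁶ = 1`), and set
`P_n = ∑_{α ∈ N_n} ᾱ X(αu)` and `Q_n = ∑_{α ∈ N_n} ρ^{-Tr α} ᾱ X(αu)`.
Then `Q_n = P_n` if `3 ∣ n`, and `Q_n = -P_n/2` otherwise. -/
theorem Q_eq_P_or_neg_half (n : ℕ) (hn : 1 ≤ n)
    (S : Finset (ℤ × ℤ)) (hS : ∀ p : ℤ × ℤ, p ∈ S ↔ p.1 ^ 2 - p.1 * p.2 + p.2 ^ 2 = n)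
    (X : ℂ → ℂ) (hX : ∀ ε z : ℂ, ε ^ 6 = 1 → X (ε * z) = ε * X z) (u : ℂ) :
    let ρ : ℂ := Complex.exp (2 * Real.pi * I / 3)
    let α : ℤ × ℤ → ℂ := fun p => (p.1 : ℂ) + (p.2 : ℂ) * ρ
    let P : ℂ := ∑ p ∈ S, (starRingEnd ℂ) (α p) * X (α p * u)
    let Q : ℂ := ∑ p ∈ S, ρ ^ (-(2 * p.1 - p.2)) * ((starRingEnd ℂ) (α p) * X (α p * u))
    (3 ∣ n → Q = P) ∧ (¬ 3 ∣ n → Q = -P / 2) := by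
  intro ρ α P Q
  have hprim : IsPrimitiveRoot ρ 3 := by
    have := Complex.isPrimitiveRoot_exp 3 (by norm_num)
    convert this using 2
    norm_num
  have hρ3 : ρ ^ (3 : ℕ) = 1 := hprim.pow_eq_one
  have hρ0 : ρ ≠ 0 := hprim.ne_zero (by norm_num)
  have hsum : 1 + ρ + ρ ^ 2 = 0 := by
    have := hprim.geom_sum_eq_zero (by norm_num)
    simpa [Finset.sum_range_succ] using this
  have hz3 : ρ ^ (3 : ℤ) = 1 := by
    rw [show (3:ℤ) = ((3:ℕ):ℤ) by rfl, zpow_natCast, hρ3]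
  have hz : ∀ t : ℤ, ρ ^ (3 * t) = 1 := fun t => by
    rw [zpow_mul, hz3, one_zpow]
  have hmod : ∀ t : ℤ, ρ ^ t = ρ ^ (t % 3) := fun t => by
    conv_lhs => rw [show t = 3 * (t / 3) + t % 3 by omega]
    rw [zpow_add₀ hρ0, hz, one_mul]
  constructor
  · intro h3
    apply Finset.sum_congr rfl
    intro p hp
    have hmem := (hS p).mp hp
    have ht : (3:ℤ) ∣ (2 * p.1 - p.2) := by
      have hn0 : ((n : ZMod 3)) = 0 := (ZMod.natCast_eq_zero_iff n 3).mpr h3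
      have heq : ((p.1 : ZMod 3))^2 - (p.1 : ZMod 3) * (p.2 : ZMod 3) + (p.2 : ZMod 3)^2 = 0 := by
        have := congrArg (fun z : ℤ => (z : ZMod 3)) hmem
        push_cast at this
        rw [this, hn0]
      have key : ∀ a b : ZMod 3, a^2 - a*b + b^2 = 0 → 2*a - b = 0 := by decide
      have := key _ _ heq
      have : ((2 * p.1 - p.2 : ℤ) : ZMod 3) = 0 := by push_cast; exact this
      exact (ZMod.intCast_zmod_eq_zero_iff_dvd _ 3).mp this
    obtain ⟨m, hm⟩ := ht
    rw [show -(2 * p.1 - p.2) = 3 * (-m) by omega, hz, one_mul]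
  · intro h3
    have hneg : ∀ p : ℤ × ℤ, p ∈ S → -p ∈ S := by
      intro p hp
      rw [hS] at hp ⊢
      simpa using by linarith [hp]
    have hα : ∀ p : ℤ × ℤ, α (-p) = - α p := by
      intro p; simp [α]; ring
    have hc : ∀ p : ℤ × ℤ, (starRingEnd ℂ) (α (-p)) * X (α (-p) * u)
        = (starRingEnd ℂ) (α p) * X (α p * u) := by
      intro p
      rw [hα]
      have hXneg : X (-(α p * u)) = - X (α p * u) := by
        have := hX (-1) (α p * u) (by norm_num)
        simpa using this
      rw [show -α p * u = -(α p * u) by ring, hXneg]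
      simp
    have hQ' : Q = ∑ p ∈ S, ρ ^ (2 * p.1 - p.2) * ((starRingEnd ℂ) (α p) * X (α p * u)) := by
      refine Finset.sum_equiv (Equiv.neg (ℤ × ℤ)) ?_ ?_
      · intro p
        constructor
        · exact fun h => hneg p h
        · intro h
          have := hneg _ h
          simpa using this
      · intro p hp
        simp only [Equiv.neg_apply]
        rw [hc]
        congr 1
        congr 1
        simp
        ring
    have hpair : ∀ p ∈ S, ρ ^ (-(2 * p.1 - p.2)) + ρ ^ (2 * p.1 - p.2) = -1 := by
      intro p hp
      have hmem := (hS p).mp hp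
      set t : ℤ := 2 * p.1 - p.2 with htdef
      have ht : ¬ (3:ℤ) ∣ t := by
        intro hdvd
        have ht0 : ((t : ZMod 3)) = 0 := (ZMod.intCast_zmod_eq_zero_iff_dvd _ 3).mpr hdvd
        have key2 : ∀ a b : ZMod 3, 2*a - b = 0 → a^2 - a*b + b^2 = 0 := by decide
        have h1 : (2 * (p.1 : ZMod 3) - (p.2 : ZMod 3)) = 0 := by
          have : ((2 * p.1 - p.2 : ℤ) : ZMod 3) = 0 := ht0
          push_cast at this; exact this
        have h2 := key2 _ _ h1
        have h3' : ((n : ZMod 3)) = 0 := by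
          have := congrArg (fun z : ℤ => (z : ZMod 3)) hmem
          push_cast at this
          rw [← this]; exact h2
        exact h3 ((ZMod.natCast_eq_zero_iff n 3).mp h3')
      have hr : t % 3 = 1 ∨ t % 3 = 2 := by omega
      have hnr : (-t) % 3 = 1 ∨ (-t) % 3 = 2 := by omega
      rw [hmod t, hmod (-t)]
      rcases hr with h | h <;> rcases hnr with h' | h' <;>
        first
        | (exfalso; omega)
        | (rw [h, h', show (2:ℤ) = ((2:ℕ):ℤ) from rfl, show (1:ℤ) = ((1:ℕ):ℤ) from rfl,
              zpow_natCast, zpow_natCast]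
           linear_combination hsum)
    have h2Q : Q + Q = -P := by
      nth_rewrite 2 [hQ']
      show (∑ p ∈ S, ρ ^ (-(2 * p.1 - p.2)) * ((starRingEnd ℂ) (α p) * X (α p * u))) + _ = _
      rw [← Finset.sum_add_distrib,
        show -P = ∑ p ∈ S, -((starRingEnd ℂ) (α p) * X (α p * u)) from by
          rw [← Finset.sum_neg_distrib]]
      apply Finset.sum_congr rfl
      intro p hp
      rw [← add_mul, hpair p hp]
      ring
    linear_combination h2Q / 2
end

section
/- Let $X,Y,Z$ be holomorphic functions on $\mathbb{C}$ with Taylor expansions at the origin $X(z)=\sum_{j\ge 0}c_{6j+1}z^{6j+1}$, $Y(z)=\sum_{j\ge 0}d_{3j}z^{3j}$ with $d_0=1$, and $Z(z)=Y(-z)$, satisfying $X(z)^3 = \rho\,(Y(z)^3 - Z(z)^3)$ and, with $\xi = (\rho^2-1)/3$, the relations $Y(\xi z)^3 = \frac{1}{\rho-1}(\rho Y(z) - Z(z))$ and $Z(\xi z)^3 = \frac{1}{\rho-1}(-Y(z) + \rho Z(z))$. Then the coefficients satisfy $d_3 = \rho^2 c_1^3/3!$, $c_7 = 6\rho\,c_1^7/7!$,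 and $d_6 = -2\rho\,c_1^6/6!$. -/
set_option maxHeartbeats 2000000

open Complex Finset

noncomputable def mulC (a b : ℕ → ℂ) : ℕ → ℂ :=
  fun n => ∑ p ∈ Finset.HasAntidiagonal.antidiagonal n, a p.1 * b p.2

noncomputable def cubeC (a : ℕ → ℂ) : ℕ → ℂ := mulC a (mulC a a)

noncomputable def ext6 (c : ℕ → ℂ) : ℕ → ℂ := fun n => if n % 6 = 1 then c (n / 6) else 0
noncomputable def ext3 (d : ℕ → ℂ) : ℕ → ℂ := fun n => if n % 3 = 0 then d (n / 3) else 0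
noncomputable def altC (a : ℕ → ℂ) : ℕ → ℂ := fun n => (-1 : ℂ) ^ n * a n
noncomputable def scC (t : ℂ) (a : ℕ → ℂ) : ℕ → ℂ := fun n => t ^ n * a n

lemma hasSum_mulC {f g : ℂ → ℂ} {a b : ℕ → ℂ}
    (ha : ∀ z : ℂ, HasSum (fun n => a n * z ^ n) (f z))
    (hb : ∀ z : ℂ, HasSum (fun n => b n * z ^ n) (g z)) :
    ∀ z : ℂ, HasSum (fun n => mulC a b n * z ^ n) (f z * g z) := by
  intro z
  have hfa := (ha z).summable
  have hfb := (hb z).summable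
  have hna : Summable fun n => ‖a n * z ^ n‖ := summable_norm_iff.mpr hfa
  have hnb : Summable fun n => ‖b n * z ^ n‖ := summable_norm_iff.mpr hfb
  have hs : Summable fun n => ∑ kl ∈ Finset.HasAntidiagonal.antidiagonal n,
      (a kl.1 * z ^ kl.1) * (b kl.2 * z ^ kl.2) :=
    summable_sum_mul_antidiagonal_of_summable_norm' (f := fun n => a n * z ^ n)
      (g := fun n => b n * z ^ n) hna hfa hnb hfb
  have ht := tsum_mul_tsum_eq_tsum_sum_antidiagonal_of_summable_norm
    (f := fun n => a n * z ^ n) (g := fun n => b n * z ^ n) hna hnb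
  rw [(ha z).tsum_eq, (hb z).tsum_eq] at ht
  have hfun : (fun n => mulC a b n * z ^ n) = fun n => ∑ kl ∈ Finset.HasAntidiagonal.antidiagonal n,
      (a kl.1 * z ^ kl.1) * (b kl.2 * z ^ kl.2) := by
    funext n
    rw [mulC, Finset.sum_mul]
    refine Finset.sum_congr rfl fun p hp => ?_
    have hpn : p.1 + p.2 = n := Finset.HasAntidiagonal.mem_antidiagonal.mp hp
    rw [← hpn, pow_add]; ring
  rw [hfun, ht]
  exact hs.hasSum

lemma coeff_unique {f : ℂ → ℂ} {a b : ℕ → ℂ}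
    (ha : ∀ z : ℂ, HasSum (fun n => a n * z ^ n) (f z))
    (hb : ∀ z : ℂ, HasSum (fun n => b n * z ^ n) (f z)) : a = b := by
  have key : ∀ (u : ℕ → ℂ), (∀ z : ℂ, HasSum (fun n => u n * z ^ n) (f z)) →
      HasFPowerSeriesAt f (FormalMultilinearSeries.ofScalars ℂ u) 0 := by
    intro u hu
    refine ⟨1, ?_, one_pos, ?_⟩
    · have hsum : Summable u := by simpa using (hu 1).summable
      have hb : ∀ n : ℕ, ‖FormalMultilinearSeries.ofScalars ℂ u n‖ * (1:ℝ) ^ n ≤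
          ∑' n, ‖u n‖ := by
        intro n
        rw [FormalMultilinearSeries.ofScalars_norm, one_pow, mul_one]
        exact Summable.le_tsum (summable_norm_iff.mpr hsum) n fun m _ => norm_nonneg _
      exact FormalMultilinearSeries.le_radius_of_bound _ _ hb
    · intro y _
      have heq : (fun n => (FormalMultilinearSeries.ofScalars ℂ u n) fun _ => y)
          = fun n => u n * y ^ n := by
        funext n
        rw [FormalMultilinearSeries.ofScalars_apply_eq, smul_eq_mul]
      rw [heq, zero_add]
      exact hu y
  have := (key a ha).eq_formalMultilinearSeries (key b hb)
  exact FormalMultilinearSeries.ofScalars_series_injective ℂ ℂ this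

lemma hasSum_linC {f g : ℂ → ℂ} {a b : ℕ → ℂ} (p q : ℂ)
    (ha : ∀ z : ℂ, HasSum (fun n => a n * z ^ n) (f z))
    (hb : ∀ z : ℂ, HasSum (fun n => b n * z ^ n) (g z)) :
    ∀ z : ℂ, HasSum (fun n => (p * a n + q * b n) * z ^ n) (p * f z + q * g z) := by
  intro z
  have h := (((ha z).mul_left p)).add ((hb z).mul_left q)
  have hfun : (fun n => (p * a n + q * b n) * z ^ n)
      = fun n => p * (a n * z ^ n) + q * (b n * z ^ n) := by
    funext n; ring
  rw [hfun]
  exact h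


/-- if `X(z) = ∑_j c_j z^{6j+1}`, `Y(z) = ∑_j d_j z^{3j}` with `d₀ = 1`,
`Z(z) = Y(-z)`, and the functional equations
`X³ = ρ(Y³ - Z³)`, `Y(ξz)³ = (ρY(z) - Z(z))/(ρ-1)`, `Z(ξz)³ = (-Y(z) + ρZ(z))/(ρ-1)`
hold with `ξ = (ρ²-1)/3`, then `d₁ = ρ²c₀³/3!`, `c₁ = 6ρc₀⁷/7!`, `d₂ = -2ρc₀⁶/6!`
(these are the paper's `d₃`, `c₇`, `d₆` expressed in terms of `c₁ = c₀`). -/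
theorem taylor_coefficients_XYZ
    (Xf Yf Zf : ℂ → ℂ) (c d : ℕ → ℂ)
    (hX : ∀ z : ℂ, HasSum (fun j : ℕ => c j * z ^ (6 * j + 1)) (Xf z))
    (hY : ∀ z : ℂ, HasSum (fun j : ℕ => d j * z ^ (3 * j)) (Yf z))
    (hd0 : d 0 = 1)
    (hZ : ∀ z : ℂ, Zf z = Yf (-z)) :
    let ρ : ℂ := Complex.exp (2 * Real.pi * I / 3)
    let ξ : ℂ := (ρ ^ 2 - 1) / 3
    (∀ z : ℂ, Xf z ^ 3 = ρ * (Yf z ^ 3 - Zf z ^ 3)) →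
    (∀ z : ℂ, Yf (ξ * z) ^ 3 = (1 / (ρ - 1)) * (ρ * Yf z - Zf z)) →
    (∀ z : ℂ, Zf (ξ * z) ^ 3 = (1 / (ρ - 1)) * (-Yf z + ρ * Zf z)) →
    d 1 = ρ ^ 2 * c 0 ^ 3 / (Nat.factorial 3) ∧
      c 1 = 6 * ρ * c 0 ^ 7 / (Nat.factorial 7) ∧
      d 2 = -2 * ρ * c 0 ^ 6 / (Nat.factorial 6) := by
  intro ρ ξ heq1 heq2 heq3
  -- basic facts about ρ and ξ
  have hprim : IsPrimitiveRoot ρ 3 := by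
    have h := Complex.isPrimitiveRoot_exp 3 (by norm_num)
    have h3 : ((3:ℕ):ℂ) = 3 := by norm_num
    rw [h3] at h
    exact h
  have hρ3 : ρ ^ 3 = 1 := hprim.pow_eq_one
  have hρne1 : ρ ≠ 1 := hprim.ne_one (by norm_num)
  have hρ1 : ρ - 1 ≠ 0 := sub_ne_zero.mpr hρne1
  have hρ : ρ ^ 2 + ρ + 1 = 0 := by
    have h := hρ3
    have : (ρ - 1) * (ρ ^ 2 + ρ + 1) = 0 := by linear_combination h
    rcases mul_eq_zero.mp this with h' | h'
    · exact absurd h' hρ1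
    · exact h'
  have hξdef : ξ = (ρ ^ 2 - 1) / 3 := rfl
  have hξ2 : ξ ^ 2 = -(ρ ^ 2) / 3 := by
    rw [hξdef]
    linear_combination ((ρ ^ 2 - ρ + 1) / 9) * hρ
  have hξ0 : ξ ≠ 0 := by
    rw [hξdef]
    intro h
    have h2 : ρ ^ 2 = 1 := by
      field_simp at h
      linear_combination h
    have hm2 : ρ = -2 := by linear_combination hρ - h2
    have : (1:ℂ) = -8 := by rw [← hρ3, hm2]; norm_num
    norm_num at this
  -- extended coefficient sequences
  have hXe : ∀ z : ℂ, HasSum (fun n => ext6 c n * z ^ n) (Xf z) := by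
    intro z
    have hinj : Function.Injective (fun j : ℕ => 6 * j + 1) := fun i j h => by dsimp only at h; omega
    refine (Function.Injective.hasSum_iff hinj ?_).mp ?_
    · intro n hn
      have hmod : ¬ (n % 6 = 1) := by
        intro h
        exact hn ⟨n / 6, by dsimp only; omega⟩
      simp [ext6, hmod]
    · have hfun : ((fun n => ext6 c n * z ^ n) ∘ fun j : ℕ => 6 * j + 1)
          = fun j : ℕ => c j * z ^ (6 * j + 1) := by
        funext j
        have h1 : (6 * j + 1) % 6 = 1 := by omega
        have h2 : (6 * j + 1) / 6 = j := by omega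
        simp [Function.comp, ext6, h1, h2]
      rw [hfun]
      exact hX z
  have hYe : ∀ z : ℂ, HasSum (fun n => ext3 d n * z ^ n) (Yf z) := by
    intro z
    have hinj : Function.Injective (fun j : ℕ => 3 * j) := fun i j h => by dsimp only at h; omega
    refine (Function.Injective.hasSum_iff hinj ?_).mp ?_
    · intro n hn
      have hmod : ¬ (n % 3 = 0) := by
        intro h
        exact hn ⟨n / 3, by dsimp only; omega⟩
      simp [ext3, hmod]
    · have hfun : ((fun n => ext3 d n * z ^ n) ∘ fun j : ℕ => 3 * j)
          = fun j : ℕ => d j * z ^ (3 * j) := by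
        funext j
        have h1 : (3 * j) % 3 = 0 := by omega
        have h2 : (3 * j) / 3 = j := by omega
        simp [Function.comp, ext3, h1, h2]
      rw [hfun]
      exact hY z
  have hZe : ∀ z : ℂ, HasSum (fun n => altC (ext3 d) n * z ^ n) (Zf z) := by
    intro z
    rw [hZ z]
    have h := hYe (-z)
    have hfun : (fun n => ext3 d n * (-z) ^ n) = fun n => altC (ext3 d) n * z ^ n := by
      funext n
      rw [altC, neg_pow]
      ring
    rwa [hfun] at h
  have hXse : ∀ z : ℂ, HasSum (fun n => scC ξ (ext6 c) n * z ^ n) (Xf (ξ * z)) := by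
    intro z
    have h := hXe (ξ * z)
    have hfun : (fun n => ext6 c n * (ξ * z) ^ n) = fun n => scC ξ (ext6 c) n * z ^ n := by
      funext n
      rw [scC, mul_pow]
      ring
    rwa [hfun] at h
  have hYse : ∀ z : ℂ, HasSum (fun n => scC ξ (ext3 d) n * z ^ n) (Yf (ξ * z)) := by
    intro z
    have h := hYe (ξ * z)
    have hfun : (fun n => ext3 d n * (ξ * z) ^ n) = fun n => scC ξ (ext3 d) n * z ^ n := by
      funext n
      rw [scC, mul_pow]
      ring
    rwa [hfun] at h
  -- cubes
  have cube3 : ∀ (u : ℕ → ℂ) (F : ℂ → ℂ), (∀ z : ℂ, HasSum (fun n => u n * z ^ n) (F z)) →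
      ∀ z : ℂ, HasSum (fun n => cubeC u n * z ^ n) (F z ^ 3) := by
    intro u F hu z
    have h := hasSum_mulC hu (hasSum_mulC hu hu) z
    have hv : F z * (F z * F z) = F z ^ 3 := by ring
    rwa [hv] at h
  have hX3 := cube3 _ _ hXe
  have hY3 := cube3 _ _ hYe
  have hZ3 := cube3 _ _ hZe
  have hXs3 := cube3 _ _ hXse
  have hYs3 := cube3 _ _ hYse
  -- derived identity X(ξz)³ = -ξ(Y - Z)
  have hsc : ρ * (1 / (ρ - 1)) * (ρ + 1) = -ξ := by
    rw [hξdef]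
    field_simp
    linear_combination (ρ + 1) * hρ
  have heq4 : ∀ z : ℂ, Xf (ξ * z) ^ 3 = -ξ * (Yf z - Zf z) := by
    intro z
    rw [heq1 (ξ * z), heq2 z, heq3 z]
    linear_combination (Yf z - Zf z) * hsc
  -- coefficient identities
  have eq1 : cubeC (ext6 c) = fun n => ρ * cubeC (ext3 d) n + (-ρ) * cubeC (altC (ext3 d)) n := by
    refine coeff_unique (f := fun z => Xf z ^ 3) hX3 ?_
    intro z
    have h := hasSum_linC ρ (-ρ) hY3 hZ3 z
    have hv : ρ * Yf z ^ 3 + (-ρ) * Zf z ^ 3 = Xf z ^ 3 := by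
      rw [heq1 z]; ring
    rwa [hv] at h
  have eq2 : cubeC (scC ξ (ext3 d))
      = fun n => ((1 / (ρ - 1)) * ρ) * ext3 d n + (-(1 / (ρ - 1))) * altC (ext3 d) n := by
    refine coeff_unique (f := fun z => Yf (ξ * z) ^ 3) hYs3 ?_
    intro z
    have h := hasSum_linC ((1 / (ρ - 1)) * ρ) (-(1 / (ρ - 1))) hYe hZe z
    have hv : (1 / (ρ - 1)) * ρ * Yf z + (-(1 / (ρ - 1))) * Zf z = Yf (ξ * z) ^ 3 := by
      rw [heq2 z]; ring
    rwa [hv] at h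
  have eq4 : cubeC (scC ξ (ext6 c)) = fun n => (-ξ) * ext3 d n + ξ * altC (ext3 d) n := by
    refine coeff_unique (f := fun z => Xf (ξ * z) ^ 3) hXs3 ?_
    intro z
    have h := hasSum_linC (-ξ) ξ hYe hZe z
    have hv : (-ξ) * Yf z + ξ * Zf z = Xf (ξ * z) ^ 3 := by
      rw [heq4 z]; ring
    rwa [hv] at h
  -- coefficient extraction
  have E13 : c 0 ^ 3 = 6 * ρ * d 1 := by
    have h := congrFun eq1 3
    simp only [cubeC, mulC, ext6, ext3, altC, scC, Finset.Nat.sum_antidiagonal_eq_sum_range_succ_mk,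
      Finset.sum_range_succ, Finset.sum_range_zero] at h
    norm_num [hd0] at h
    linear_combination h
  have E19 : 3 * c 0 ^ 2 * c 1 = 2 * ρ * (3 * d 3 + 6 * d 1 * d 2 + d 1 ^ 3) := by
    have h := congrFun eq1 9
    simp only [cubeC, mulC, ext6, ext3, altC, scC, Finset.Nat.sum_antidiagonal_eq_sum_range_succ_mk,
      Finset.sum_range_succ, Finset.sum_range_zero] at h
    norm_num [hd0] at h
    linear_combination h
  have E121 : 3 * c 0 ^ 2 * c 3 + 6 * c 0 * c 1 * c 2 + c 1 ^ 3
      = 2 * ρ * (3 * d 7 + 6 * d 1 * d 6 + 6 * d 2 * d 5 + 6 * d 3 * d 4 + 3 * d 1 ^ 2 * d 5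
        + 6 * d 1 * d 2 * d 4 + 3 * d 1 * d 3 ^ 2 + 3 * d 2 ^ 2 * d 3) := by
    have h := congrFun eq1 21
    simp only [cubeC, mulC, ext6, ext3, altC, scC, Finset.Nat.sum_antidiagonal_eq_sum_range_succ_mk,
      Finset.sum_range_succ, Finset.sum_range_zero] at h
    norm_num [hd0] at h
    linear_combination h
  have E26 : ξ ^ 6 * (3 * d 2 + 3 * d 1 ^ 2) = (1 / (ρ - 1)) * ρ * d 2 - (1 / (ρ - 1)) * d 2 := by
    have h := congrFun eq2 6
    simp only [cubeC, mulC, ext6, ext3, altC, scC, Finset.Nat.sum_antidiagonal_eq_sum_range_succ_mk,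
      Finset.sum_range_succ, Finset.sum_range_zero] at h
    norm_num [hd0] at h
    linear_combination h
  have E43 : ξ ^ 3 * c 0 ^ 3 = -2 * ξ * d 1 := by
    have h := congrFun eq4 3
    simp only [cubeC, mulC, ext6, ext3, altC, scC, Finset.Nat.sum_antidiagonal_eq_sum_range_succ_mk,
      Finset.sum_range_succ, Finset.sum_range_zero] at h
    norm_num [hd0] at h
    linear_combination h
  have E49 : ξ ^ 9 * (3 * c 0 ^ 2 * c 1) = -2 * ξ * d 3 := by
    have h := congrFun eq4 9
    simp only [cubeC, mulC, ext6, ext3, altC, scC, Finset.Nat.sum_antidiagonal_eq_sum_range_succ_mk,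
      Finset.sum_range_succ, Finset.sum_range_zero] at h
    norm_num [hd0] at h
    linear_combination h
  have E421 : ξ ^ 21 * (3 * c 0 ^ 2 * c 3 + 6 * c 0 * c 1 * c 2 + c 1 ^ 3) = -2 * ξ * d 7 := by
    have h := congrFun eq4 21
    simp only [cubeC, mulC, ext6, ext3, altC, scC, Finset.Nat.sum_antidiagonal_eq_sum_range_succ_mk,
      Finset.sum_range_succ, Finset.sum_range_zero] at h
    norm_num [hd0] at h
    linear_combination h
  -- powers of ξ
  have hξ6 : ξ ^ 6 = -1 / 27 := by
    linear_combination (ξ^4 - ρ^2*ξ^2/3 + ρ^4/9) * hξ2 - ((ρ^3 + 1)/27) * hρ3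
  have hξ8 : ξ ^ 8 = ρ ^ 2 / 81 := by
    linear_combination (ξ^6 - ρ^2*ξ^4/3 + ρ^4*ξ^2/9 - ρ^6/27) * hξ2 + (ρ^2*(ρ^3+1)/81) * hρ3
  have hξ20 : ξ ^ 20 = ρ ^ 2 / 59049 := by
    linear_combination (ξ^18 - ρ^2*ξ^16/3 + ρ^4*ξ^14/9 - ρ^6*ξ^12/27 + ρ^8*ξ^10/81
      - ρ^10*ξ^8/243 + ρ^12*ξ^6/729 - ρ^14*ξ^4/2187 + ρ^16*ξ^2/6561 - ρ^18/19683) * hξ2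
      + (ρ^2*(ρ^15+ρ^12+ρ^9+ρ^6+ρ^3+1)/59049) * hρ3
  have hcan : ∀ x : ℂ, ξ * x = 0 → x = 0 := by
    intro x hx
    rcases mul_eq_zero.mp hx with h | h
    · exact absurd h hξ0
    · exact h
  -- d₁
  have hd1 : d 1 = ρ ^ 2 * c 0 ^ 3 / 6 := by
    have h0 : ξ * (ξ ^ 2 * c 0 ^ 3 + 2 * d 1) = 0 := by linear_combination E43
    have h1 := hcan _ h0
    linear_combination (1/2) * h1 - (c 0 ^ 3 / 2) * hξ2
  -- d₂
  have E26' : ξ ^ 6 * (3 * d 2 + 3 * d 1 ^ 2) = d 2 := by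
    have hrd : (1 / (ρ - 1)) * ρ * d 2 - (1 / (ρ - 1)) * d 2 = d 2 := by
      field_simp
    exact E26.trans hrd
  have hd2 : d 2 = -2 * ρ * c 0 ^ 6 / 720 := by
    have hA : d 2 = -d 1 ^ 2 / 10 := by
      have h : -(1/27) * (3 * d 2 + 3 * d 1 ^ 2) = d 2 := by
        linear_combination E26' - (3 * d 2 + 3 * d 1 ^ 2) * hξ6
      linear_combination (-9/10) * h
    linear_combination hA - ((d 1 + ρ^2*c 0^3/6)/10) * hd1 - (ρ*c 0^6/360) * hρ3
  -- d₃
  have hd3 : d 3 = -(ρ ^ 2 * c 0 ^ 2 * c 1) / 54 := by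
    have h0 : ξ * (ξ ^ 8 * (3 * c 0 ^ 2 * c 1) + 2 * d 3) = 0 := by linear_combination E49
    have h1 := hcan _ h0
    linear_combination (1/2) * h1 - (3 * c 0 ^ 2 * c 1 / 2) * hξ8
  -- main coefficient results
  have hc1 : c 1 = 6 * ρ * c 0 ^ 7 / 5040 := by
    by_cases hc0 : c 0 = 0
    · -- degenerate case
      have hd10 : d 1 = 0 := by rw [hd1, hc0]; ring
      have hd20 : d 2 = 0 := by rw [hd2, hc0]; ring
      have hd30 : d 3 = 0 := by rw [hd3, hc0]; ring
      have hS : c 1 ^ 3 = 6 * ρ * d 7 := by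
        linear_combination E121 + (-3*c 0*c 3 - 6*c 1*c 2) * hc0
          + 2*ρ*(6*d 6 + 3*d 1*d 5 + 6*d 2*d 4 + 3*d 3^2) * hd10
          + 2*ρ*(6*d 5 + 3*d 2*d 3) * hd20 + 12*ρ*d 4 * hd30
      have h0 : ξ * (ξ ^ 20 * c 1 ^ 3 + 2 * d 7) = 0 := by
        linear_combination E421 - ξ^21*(3*c 0*c 3 + 6*c 1*c 2) * hc0
      have h1 := hcan _ h0
      have h2 : ρ ^ 2 * c 1 ^ 3 / 59049 + 2 * d 7 = 0 := by
        linear_combination h1 - c 1 ^ 3 * hξ20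
      have h4 : c 1 ^ 3 * (19684/19683) = 0 := by
        linear_combination 3*ρ*h2 + hS - (c 1 ^ 3/19683) * hρ3
      have h5 : c 1 ^ 3 = 0 := by linear_combination (19683/19684) * h4
      have h6 : c 1 = 0 := by
        exact pow_eq_zero_iff (by norm_num) |>.mp h5
      rw [h6, hc0]
      ring
    · -- nondegenerate case
      rw [hd3, hd1, hd2] at E19
      have hkey : c 0 ^ 2 * (c 1 - 6 * ρ * c 0 ^ 7 / 5040) = 0 := by
        linear_combination (9/28) * E19 + (-(c 0^2*c 1)/28 + c 0^9*(ρ^4/336 + ρ/840)) * hρ3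
      rcases mul_eq_zero.mp hkey with h | h
      · exact absurd h (pow_ne_zero 2 hc0)
      · exact sub_eq_zero.mp h
  refine ⟨?_, ?_, ?_⟩
  · rw [hd1]
    norm_num [Nat.factorial]
  · rw [hc1]
    norm_num [Nat.factorial]
  · rw [hd2]
    norm_num [Nat.factorial]
end
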